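/- arXiv:2307.05660 — 8 statements merged into one kernel-verified Lean document; each statement's English description precedes it below -/
import Mathlib

section
/- Let T be a linear operator in X with Y0 = ⋂_{n≥1} D(T^n). If x ∈ Y0 has dense orbit under T (x is hypercyclic), then for every p ≥ 1 the vector T^p x is also hypercyclic for T. -/
open Set Filter Topology

variable {X : Type*} [NormedAddCommGroup X] [NormedSpace ℝ X] [CompleteSpace X]

/-- The natural domain of the n-th power of an operator `T` with domain `D`:
`D(T^0) = X`, `D(T^{n+1}) = {x ∈ D(T^n) : T^n x ∈ D}`. -/
def pdom (D : Submodule ℝ X) (T : X →ₗ[ℝ] X) : ℕ → Set X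
  | 0 => Set.univ
  | n + 1 => {x | x ∈ pdom D T n ∧ (⇑T)^[n] x ∈ (D : Set X)}

/-- `Y0 = ⋂_{n ≥ 1} D(T^n)`, the maximal dynamical domain. -/
def Y0 (D : Submodule ℝ X) (T : X →ₗ[ℝ] X) : Set X := ⋂ n : ℕ, pdom D T (n + 1)

/-- The orbit of `x` under `T`. -/
def orb (T : X →ₗ[ℝ] X) (x : X) : Set X := Set.range fun n : ℕ => (⇑T)^[n] x

/-- The set of hypercyclic vectors of `T`. -/
def HCset (D : Submodule ℝ X) (T : X →ₗ[ℝ] X) : Set X :=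
  {x | x ∈ Y0 D T ∧ Dense (orb T x)}

/-- The set of relatively hypercyclic vectors of `(T, Y)`. -/
def RHCset (D : Submodule ℝ X) (T : X →ₗ[ℝ] X) (Y : Set X) : Set X :=
  {x | x ∈ Y0 D T ∧ x ≠ 0 ∧ Y ⊆ closure (orb T x ∩ Y)}

/-- `(T, Y)` is topologically transitive (w.r.t. the subspace topology on `Y`). -/
def TT (T : X →ₗ[ℝ] X) (Y : Set X) : Prop :=
  ∀ G H : Set X, IsOpen G → IsOpen H → (G ∩ Y).Nonempty → (H ∩ Y).Nonempty →
    ∃ n : ℕ, ((⇑T)^[n] '' (G ∩ Y) ∩ (H ∩ Y)).Nonempty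

/-- `(T, Y)` is mixing. -/
def Mixing (T : X →ₗ[ℝ] X) (Y : Set X) : Prop :=
  ∀ G H : Set X, IsOpen G → IsOpen H → (G ∩ Y).Nonempty → (H ∩ Y).Nonempty →
    ∃ N : ℕ, ∀ n ≥ N, ((⇑T)^[n] '' (G ∩ Y) ∩ (H ∩ Y)).Nonempty

/-- `(T, Y)` is strongly topologically transitive. -/
def STT (T : X →ₗ[ℝ] X) (Y : Set X) : Prop :=
  ∀ G : Set X, IsOpen G → (G ∩ Y).Nonempty →
    Y \ {0} ⊆ ⋃ n : ℕ, (⇑T)^[n] '' (G ∩ Y)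

/-- `(T, Y)` is hypermixing. -/
def HM (T : X →ₗ[ℝ] X) (Y : Set X) : Prop :=
  ∀ G : Set X, IsOpen G → (G ∩ Y).Nonempty →
    Y \ {0} ⊆ ⋃ i : ℕ, ⋂ n : ℕ, ⋂ (_ : i ≤ n), (⇑T)^[n] '' (G ∩ Y)

/-- `(T, Y)` is supermixing. -/
def SM (T : X →ₗ[ℝ] X) (Y : Set X) : Prop :=
  ∀ G : Set X, IsOpen G → (G ∩ Y).Nonempty →
    Y ⊆ closure ((⋃ i : ℕ, ⋂ n : ℕ, ⋂ (_ : i ≤ n), (⇑T)^[n] '' (G ∩ Y)) ∩ Y)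

/-- The generalized kernel `GK(T) = ⋃_{n ≥ 1} Ker T^n`. -/
def GK (D : Submodule ℝ X) (T : X →ₗ[ℝ] X) : Set X :=
  ⋃ n : ℕ, {x | x ∈ pdom D T (n + 1) ∧ (⇑T)^[n + 1] x = 0}

lemma pdom_iff (D : Submodule ℝ X) (T : X →ₗ[ℝ] X) (n : ℕ) (y : X) :
    y ∈ pdom D T n ↔ ∀ k < n, (⇑T)^[k] y ∈ (D : Set X) := by
  induction n with
  | zero => simp [pdom]
  | succ n ih =>
    simp only [pdom, Set.mem_setOf_eq, ih]
    constructor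
    · rintro ⟨h1, h2⟩ k hk
      rcases Nat.lt_succ_iff_lt_or_eq.mp hk with h | h
      · exact h1 k h
      · subst h; exact h2
    · intro h
      exact ⟨fun k hk => h k (hk.trans (Nat.lt_succ_self n)), h n (Nat.lt_succ_self n)⟩

/-- if `x` is hypercyclic for `T` then so is `T^p x` for every `p ≥ 1`. -/
theorem stmt2 [TopologicalSpace.SeparableSpace X] (hinf : ¬ FiniteDimensional ℝ X)
    (D : Submodule ℝ X) (T : X →ₗ[ℝ] X) (x : X) (hx : x ∈ HCset D T)
    (p : ℕ) (hp : 1 ≤ p) :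
    (⇑T)^[p] x ∈ HCset D T := by
  obtain ⟨hxY, hxD⟩ := hx
  have hX : Nontrivial X := by
    by_contra h
    have : Subsingleton X := not_nontrivial_iff_subsingleton.mp h
    exact hinf inferInstance
  have hY : ∀ k : ℕ, (⇑T)^[k] x ∈ (D : Set X) := by
    intro k
    have := Set.mem_iInter.mp hxY k
    exact ((pdom_iff D T (k+1) x).mp this) k (Nat.lt_succ_self k)
  constructor
  · apply Set.mem_iInter.mpr
    intro n
    rw [pdom_iff]
    intro k _
    rw [← Function.iterate_add_apply]
    exact hY (k + p)
  · -- density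
    haveI : ∀ y : X, Filter.NeBot (𝓝[≠] y) := fun y => Module.punctured_nhds_neBot ℝ X y
    apply Dense.mono _ (hxD.diff_finite ((Set.finite_Iio p).image fun k => (⇑T)^[k] x))
    rintro y ⟨⟨m, rfl⟩, hy⟩
    have hm : p ≤ m := by
      by_contra h
      exact hy ⟨m, Nat.lt_of_not_le h, rfl⟩
    refine ⟨m - p, ?_⟩
    show (⇑T)^[m - p] ((⇑T)^[p] x) = (⇑T)^[m] x
    rw [← Function.iterate_add_apply, Nat.sub_add_cancel hm]
end

section
/- Let T be a hypercyclic linear operator in X and Y a linear subspace of Y0 = ⋂_{n≥1} D(T^n) containing the orbit orb(x,T) of some hypercyclic vector x. Then (T,Y) is topologically transitive: for any nonempty relatively open subsets U, V of Y, there exists n ≥ 0 with T^n(U) ∩ V ≠ ∅. -/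
open Set Filter Topology

variable {X : Type*} [NormedAddCommGroup X] [NormedSpace ℝ X] [CompleteSpace X]

/-- if `Y ⊆ Y0` contains the orbit of a hypercyclic vector,
then `(T, Y)` is topologically transitive. -/
theorem stmt4 [TopologicalSpace.SeparableSpace X] (hinf : ¬ FiniteDimensional ℝ X)
    (D : Submodule ℝ X) (T : X →ₗ[ℝ] X) (Y : Submodule ℝ X)
    (hY : (Y : Set X) ⊆ Y0 D T)
    (x : X) (hx : x ∈ HCset D T) (horb : orb T x ⊆ (Y : Set X)) :
    TT T (Y : Set X) := by
  obtain ⟨-, hdense⟩ := hx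
  have hnt : Nontrivial X := by
    by_contra h
    rw [not_nontrivial_iff_subsingleton] at h
    haveI := h
    exact hinf inferInstance
  intro G H hG hH hGY hHY
  obtain ⟨g, hgG, hgY⟩ := hGY
  obtain ⟨h, hhH, hhY⟩ := hHY
  obtain ⟨y, hyorb, hyG⟩ := hdense.exists_mem_open hG ⟨g, hgG⟩
  obtain ⟨k, rfl⟩ := hyorb
  -- tail of the orbit is dense
  have hfin : (Set.Finite ((fun j : ℕ => (⇑T)^[j] x) '' (Set.Iio k))) :=
    (Set.finite_Iio k).image _
  have htail : Dense (Set.range fun m : ℕ => (⇑T)^[m + k] x) := by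
    refine (hdense.diff_finite hfin).mono ?_
    rintro z ⟨⟨j, rfl⟩, hz⟩
    have hjk : k ≤ j := by
      by_contra hlt
      exact hz ⟨j, Set.mem_Iio.mpr (by omega), rfl⟩
    exact ⟨j - k, show (⇑T)^[j - k + k] x = _ by rw [Nat.sub_add_cancel hjk]⟩
  obtain ⟨z, hztail, hzH⟩ := htail.exists_mem_open hH ⟨h, hhH⟩
  obtain ⟨m, rfl⟩ := hztail
  refine ⟨m, (⇑T)^[m + k] x, ⟨(⇑T)^[k] x, ⟨hyG, horb ⟨k, rfl⟩⟩, ?_⟩,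
    hzH, horb ⟨m + k, rfl⟩⟩
  rw [← Function.iterate_add_apply]
end

section
/- If T is a hypercyclic linear operator in X, then (T, Y0) is topologically transitive, where Y0 = ⋂_{n≥1} D(T^n). That is, HC ⇒ TT for unbounded linear operators. -/
open Set Filter Topology

variable {X : Type*} [NormedAddCommGroup X] [NormedSpace ℝ X] [CompleteSpace X]

/-! `Y0` is `T`-invariant, and the orbit of `T^m x` is the orbit of `x` minus finitely many
points, hence still dense because `X` has no isolated points. So for a hypercyclic `x` and open
`G`, `H` meeting `Y0`, some `T^m x` lies in `G` and then some `T^n (T^m x)` lies in `H`. -/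

lemma iterate_mem_pdom {X : Type*} [NormedAddCommGroup X] [NormedSpace ℝ X]
    (D : Submodule ℝ X) (T : X →ₗ[ℝ] X) (m : ℕ) :
    ∀ n x, x ∈ pdom D T (m + n) → (⇑T)^[m] x ∈ pdom D T n
  | 0, _, _ => trivial
  | n + 1, x, ⟨hx, hTx⟩ =>
    ⟨iterate_mem_pdom D T m n x hx, by rwa [← Function.iterate_add_apply, Nat.add_comm]⟩

lemma iterate_mem_Y0 {X : Type*} [NormedAddCommGroup X] [NormedSpace ℝ X]
    (D : Submodule ℝ X) (T : X →ₗ[ℝ] X) (m : ℕ) {x : X} (hx : x ∈ Y0 D T) :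
    (⇑T)^[m] x ∈ Y0 D T :=
  mem_iInter.2 fun n => iterate_mem_pdom D T m (n + 1) x (mem_iInter.1 hx (m + n))

lemma Dense.range_iterate_iterate {α : Type*} [TopologicalSpace α] [T1Space α]
    [∀ a : α, (𝓝[≠] a).NeBot] {f : α → α} {x : α} (h : Dense (range fun n => f^[n] x))
    (m : ℕ) :
    Dense (range fun n => f^[n] (f^[m] x)) := by
  refine (h.sdiff_finite ((finite_Iio m).image fun k => f^[k] x)).mono ?_
  rintro _ ⟨⟨k, rfl⟩, hk⟩
  have hmk : m ≤ k := not_lt.1 fun hkm => hk ⟨k, hkm, rfl⟩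
  exact ⟨k - m, by dsimp only; rw [← Function.iterate_add_apply, Nat.sub_add_cancel hmk]⟩

theorem stmt5_general (hinf : ¬ FiniteDimensional ℝ X)
    (D : Submodule ℝ X) (T : X →ₗ[ℝ] X)
    (hhc : ∃ x, x ∈ HCset D T) :
    TT T (Y0 D T) := by
  obtain ⟨x, hxY, hxd⟩ := hhc
  have : Nontrivial X := not_subsingleton_iff_nontrivial.1 fun _ => hinf inferInstance
  intro G H hG hH ⟨g, hgG, _⟩ ⟨h, hhH, _⟩
  obtain ⟨_, hyG, m, rfl⟩ := hxd.inter_open_nonempty G hG ⟨g, hgG⟩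
  obtain ⟨_, hzH, n, rfl⟩ :=
    (hxd.range_iterate_iterate m).inter_open_nonempty H hH ⟨h, hhH⟩
  exact ⟨n, _, ⟨_, ⟨hyG, iterate_mem_Y0 D T m hxY⟩, rfl⟩, hzH,
    iterate_mem_Y0 D T n (iterate_mem_Y0 D T m hxY)⟩

/-- `HC ⇒ TT`: if `T` is hypercyclic, then `(T, Y0)` is topologically transitive. -/
theorem stmt5 [TopologicalSpace.SeparableSpace X] (hinf : ¬ FiniteDimensional ℝ X)
    (D : Submodule ℝ X) (T : X →ₗ[ℝ] X)
    (hhc : ∃ x, x ∈ HCset D T) :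
    TT T (Y0 D T) :=
  stmt5_general hinf D T hhc
end

section
/- Let T be an unbounded linear operator in X with Y0 = ⋂_{n≥1} D(T^n). Then T is hypercyclic if and only if (T,Y0) is relatively hypercyclic and Y0 is dense in X; in that case RHC(T) = HC(T). -/
open Set Filter Topology

variable {X : Type*} [NormedAddCommGroup X] [NormedSpace ℝ X] [CompleteSpace X]

/-! Since `Y0` is `T`-invariant, the orbit of a vector of `Y0` lies in `Y0`. So a dense orbit makes
`Y0` dense and coincides with its trace on `Y0`; conversely, when `Y0` is dense, an orbit
whose trace on `Y0` is dense in `Y0` is dense in `X`. A dense orbit cannot start at `0`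
since `X ≠ 0`. -/

section

variable {E : Type*} [NormedAddCommGroup E] [NormedSpace ℝ E]
  (D : Submodule ℝ E) (T : E →ₗ[ℝ] E)

theorem iterate_mem_pdom_of_mem_pdom_add {x : E} :
    ∀ n k, x ∈ pdom D T (n + k) → (⇑T)^[k] x ∈ pdom D T n
  | 0, _, _ => trivial
  | n + 1, k, hx => by
    rw [Nat.add_right_comm] at hx
    refine ⟨iterate_mem_pdom_of_mem_pdom_add n k hx.1, ?_⟩
    rw [← Function.iterate_add_apply]
    exact hx.2

theorem orb_subset_Y0 {x : E} (hx : x ∈ Y0 D T) : orb T x ⊆ Y0 D T := by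
  rintro _ ⟨k, rfl⟩
  refine mem_iInter.mpr fun n => iterate_mem_pdom_of_mem_pdom_add D T (n + 1) k ?_
  simpa only [Nat.add_right_comm] using mem_iInter.mp hx (n + k)

theorem orb_zero : orb T 0 = {0} := by
  simp only [orb, Function.iterate_fixed (map_zero T), range_const]

theorem ne_zero_of_dense_orb [Nontrivial E] {x : E} (hx : Dense (orb T x)) : x ≠ 0 := by
  rintro rfl
  rw [orb_zero, dense_iff_closure_eq, closure_singleton] at hx
  obtain ⟨y, hy⟩ := exists_ne (0 : E)
  exact hy (mem_singleton_iff.mp (hx ▸ mem_univ y))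

theorem dense_orb_of_mem_RHCset {Y : Set E} (hY : Dense Y) {x : E} (hx : x ∈ RHCset D T Y) :
    Dense (orb T x) :=
  dense_closure.mp (hY.mono (hx.2.2.trans (closure_mono inter_subset_left)))

theorem HCset_subset_RHCset [Nontrivial E] : HCset D T ⊆ RHCset D T (Y0 D T) := by
  rintro x ⟨hxY, hxd⟩
  refine ⟨hxY, ne_zero_of_dense_orb T hxd, ?_⟩
  rw [inter_eq_left.mpr (orb_subset_Y0 D T hxY), hxd.closure_eq]
  exact subset_univ _

theorem dense_Y0_of_mem_HCset {x : E} (hx : x ∈ HCset D T) : Dense (Y0 D T) :=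
  hx.2.mono (orb_subset_Y0 D T hx.1)

theorem RHCset_subset_HCset (hY : Dense (Y0 D T)) : RHCset D T (Y0 D T) ⊆ HCset D T :=
  fun _ hx => ⟨hx.1, dense_orb_of_mem_RHCset D T hY hx⟩

end

theorem stmt9_general (hinf : ¬ FiniteDimensional ℝ X)
    (D : Submodule ℝ X) (T : X →ₗ[ℝ] X) :
    ((∃ x, x ∈ HCset D T) ↔
      (RHCset D T (Y0 D T)).Nonempty ∧ Dense (Y0 D T)) ∧
    ((∃ x, x ∈ HCset D T) → RHCset D T (Y0 D T) = HCset D T) := by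
  have : Nontrivial X := not_subsingleton_iff_nontrivial.mp fun _ => hinf inferInstance
  refine ⟨⟨?_, ?_⟩, ?_⟩
  · rintro ⟨x, hx⟩
    exact ⟨⟨x, HCset_subset_RHCset D T hx⟩, dense_Y0_of_mem_HCset D T hx⟩
  · rintro ⟨⟨x, hx⟩, hY⟩
    exact ⟨x, RHCset_subset_HCset D T hY hx⟩
  · rintro ⟨x, hx⟩
    exact (RHCset_subset_HCset D T (dense_Y0_of_mem_HCset D T hx)).antisymm
      (HCset_subset_RHCset D T)

/-- `T` is hypercyclic iff `(T, Y0)` is relatively hypercyclic and `Y0` is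
dense in `X`; in that case `RHC(T) = HC(T)`. -/
theorem stmt9 [TopologicalSpace.SeparableSpace X] (hinf : ¬ FiniteDimensional ℝ X)
    (D : Submodule ℝ X) (T : X →ₗ[ℝ] X) :
    ((∃ x, x ∈ HCset D T) ↔
      (RHCset D T (Y0 D T)).Nonempty ∧ Dense (Y0 D T)) ∧
    ((∃ x, x ∈ HCset D T) → RHCset D T (Y0 D T) = HCset D T) :=
  stmt9_general hinf D T
end

section
/- If (T,Y) is strongly topologically transitive and Y has dimension at least 1, then Y ⊆ R(T), the range of T. -/
open Set Filter Topology

variable {X : Type*} [NormedAddCommGroup X] [NormedSpace ℝ X] [CompleteSpace X]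

/-- strong topological transitivity of `(T,Y)` implies `Y ⊆ R(T)`. -/
theorem stmt12 [TopologicalSpace.SeparableSpace X] (hinf : ¬ FiniteDimensional ℝ X)
    (D : Submodule ℝ X) (T : X →ₗ[ℝ] X) (Y : Submodule ℝ X)
    (hY : (Y : Set X) ⊆ Y0 D T)
    (hdim : ∃ y ∈ Y, y ≠ (0 : X))
    (hstt : STT T (Y : Set X)) :
    (Y : Set X) ⊆ ⇑T '' (D : Set X) := by
  intro y hy
  by_cases hy0 : y = 0
  · exact ⟨0, D.zero_mem, by simp [hy0]⟩
  · have hG : IsOpen ({y}ᶜ : Set X) := isOpen_compl_singleton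
    have hne : (({y}ᶜ : Set X) ∩ (Y : Set X)).Nonempty :=
      ⟨0, by simp [Ne.symm hy0], Y.zero_mem⟩
    have := hstt {y}ᶜ hG hne ⟨hy, hy0⟩
    obtain ⟨_, ⟨n, rfl⟩, x, ⟨hxG, hxY⟩, hxn⟩ := this
    cases n with
    | zero => exact absurd hxn hxG
    | succ m =>
      have hx0 : x ∈ Y0 D T := hY hxY
      have hxd : (⇑T)^[m] x ∈ (D : Set X) := (Set.mem_iInter.1 hx0 m).2
      refine ⟨(⇑T)^[m] x, hxd, ?_⟩
      rw [← Function.iterate_succ_apply' T m x]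
      exact hxn
end

section
/- Let T be a linear operator in X and Y ⊆ Y0 a subspace such that Y (with its subspace topology) is first countable. If (T,Y) is strongly topologically transitive, then either GK(T) ∩ Y = {0} or the closure of GK(T) ∩ Y contains Y, where GK(T) = ⋃_{n≥1} Ker T^n is the generalized kernel. -/
open Set Filter Topology

variable {X : Type*} [NormedAddCommGroup X] [NormedSpace ℝ X] [CompleteSpace X]

/-- if `(T,Y)` is strongly topologically transitive, then either
`GK(T) ∩ Y = {0}` or `Y ⊆ closure (GK(T) ∩ Y)`. -/
theorem stmt16 [TopologicalSpace.SeparableSpace X] (hinf : ¬ FiniteDimensional ℝ X)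
    (D : Submodule ℝ X) (T : X →ₗ[ℝ] X) (Y : Submodule ℝ X)
    (hY : (Y : Set X) ⊆ Y0 D T)
    (hstt : STT T (Y : Set X)) :
    GK D T ∩ (Y : Set X) = {0} ∨
      (Y : Set X) ⊆ closure (GK D T ∩ (Y : Set X)) := by
  by_cases h : ∀ z ∈ GK D T ∩ (Y : Set X), z = 0
  · left
    apply Set.eq_singleton_iff_unique_mem.mpr
    refine ⟨⟨Set.mem_iUnion.mpr ⟨0, ⟨⟨Set.mem_univ 0, by simpa using D.zero_mem⟩,
      by simp⟩⟩, Y.zero_mem⟩, fun x hx => h x hx⟩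
  · right
    push_neg at h
    obtain ⟨z, ⟨hzGK, hzY⟩, hz0⟩ := h
    obtain ⟨m, hzd, hzk⟩ := Set.mem_iUnion.mp hzGK
    intro y hy
    rw [mem_closure_iff]
    intro o ho hyo
    have hne : (o ∩ (Y : Set X)).Nonempty := ⟨y, hyo, hy⟩
    obtain ⟨n, hx⟩ := Set.mem_iUnion.mp (hstt o ho hne ⟨hzY, hz0⟩)
    obtain ⟨x, ⟨hxo, hxY⟩, hxz⟩ := hx
    refine ⟨x, hxo, Set.mem_iUnion.mpr ⟨n + m, ?_, ?_⟩, hxY⟩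
    · exact Set.mem_iInter.mp (hY hxY) (n + m)
    · have : (⇑T)^[n + m + 1] x = (⇑T)^[m + 1] ((⇑T)^[n] x) := by
        rw [← Function.iterate_add_apply]
        congr 1
        omega
      rw [this, hxz, hzk]
end

section
/- (Hypermixing criterion) Let T be a linear operator in X, Y ⊆ Y0 a subspace, and S : Y → Y a map with T(Sx) = x for all x ∈ Y. If GK(T) ∩ Y is dense in Y (closure contains Y) and for every x ∈ Y the sequence (S^n x) converges to some limit in Y, then (T,Y) is hypermixing. -/
open Set Filter Topology

variable {X : Type*} [NormedAddCommGroup X] [NormedSpace ℝ X] [CompleteSpace X]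

/-- Hypermixing criterion: if `S : Y → Y` is a right inverse of `T` on `Y`,
`GK(T) ∩ Y` is dense in `Y`, and `(S^n x)` converges in `Y` for every `x ∈ Y`,
then `(T, Y)` is hypermixing. -/
theorem stmt17 [TopologicalSpace.SeparableSpace X] (hinf : ¬ FiniteDimensional ℝ X)
    (D : Submodule ℝ X) (T : X →ₗ[ℝ] X) (Y : Submodule ℝ X)
    (hY : (Y : Set X) ⊆ Y0 D T)
    (S : X → X) (hSY : ∀ x ∈ Y, S x ∈ Y) (hTS : ∀ x ∈ Y, T (S x) = x)
    (hGK : (Y : Set X) ⊆ closure (GK D T ∩ (Y : Set X)))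
    (hconv : ∀ x ∈ Y, ∃ l ∈ Y, Filter.Tendsto (fun n : ℕ => S^[n] x) Filter.atTop (nhds l)) :
    HM T (Y : Set X) := by
  intro G hG hGY y hy
  obtain ⟨hyY, -⟩ := hy
  have hSiter : ∀ n : ℕ, ∀ x ∈ Y, S^[n] x ∈ Y := by
    intro n
    induction n with
    | zero => intro x hx; simpa using hx
    | succ n ih =>
        intro x hx
        rw [Function.iterate_succ_apply']
        exact hSY _ (ih x hx)
  have hTiterS : ∀ n : ℕ, ∀ x ∈ Y, (⇑T)^[n] (S^[n] x) = x := by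
    intro n
    induction n with
    | zero => intro x hx; simp
    | succ n ih =>
        intro x hx
        rw [Function.iterate_succ_apply' (f := S), Function.iterate_succ_apply (f := ⇑T),
          hTS _ (hSiter n x hx)]
        exact ih x hx
  obtain ⟨l, hlY, hl⟩ := hconv y hyY
  obtain ⟨x, hxG, hxY⟩ := hGY
  have hopen : IsOpen {v : X | v + l ∈ G} := hG.preimage (continuous_id.add continuous_const)
  have hmem : x - l ∈ {v : X | v + l ∈ G} := by simp [hxG]
  have hxl : x - l ∈ closure (GK D T ∩ (Y : Set X)) := hGK (Y.sub_mem hxY hlY)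
  obtain ⟨u, huG, huGK, huY⟩ := mem_closure_iff.mp hxl _ hopen hmem
  obtain ⟨m, hm⟩ := mem_iUnion.mp huGK
  have hz : ∀ k : ℕ, (⇑T)^[k] (0 : X) = 0 := by
    intro k
    induction k with
    | zero => simp
    | succ k ih => rw [Function.iterate_succ_apply', ih]; exact map_zero T
  have hker : ∀ n : ℕ, m + 1 ≤ n → (⇑T)^[n] u = 0 := by
    intro n hn
    obtain ⟨k, rfl⟩ := Nat.exists_eq_add_of_le hn
    rw [add_comm, Function.iterate_add_apply, hm.2]
    exact hz k
  have hadd : ∀ n : ℕ, ∀ a b : X, (⇑T)^[n] (a + b) = (⇑T)^[n] a + (⇑T)^[n] b := by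
    intro n
    induction n with
    | zero => intro a b; simp
    | succ n ih =>
        intro a b
        rw [Function.iterate_succ_apply, Function.iterate_succ_apply (f := ⇑T) (x := a),
          Function.iterate_succ_apply (f := ⇑T) (x := b), map_add, ih]
  have htend : Filter.Tendsto (fun n : ℕ => u + S^[n] y) Filter.atTop (nhds (u + l)) :=
    tendsto_const_nhds.add hl
  have hev : ∀ᶠ n in Filter.atTop, u + S^[n] y ∈ G := htend.eventually (hG.eventually_mem huG)
  obtain ⟨N, hN⟩ := Filter.eventually_atTop.mp hev
  refine mem_iUnion.mpr ⟨max N (m + 1), ?_⟩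
  refine mem_iInter.mpr fun n => mem_iInter.mpr fun hn => ?_
  refine ⟨u + S^[n] y, ⟨hN n (le_trans (le_max_left _ _) hn), Y.add_mem huY (hSiter n y hyY)⟩, ?_⟩
  rw [hadd, hker n (le_trans (le_max_right _ _) hn), hTiterS n y hyY, zero_add]
end

section
/- Let Y1 ⊆ Y2 ⊆ closure(Y1) be dynamical domains for a linear operator T. If (T,Y1) is hypermixing, then (T,Y2) is supermixing; and if (T,Y1) is strongly topologically transitive, then (T,Y2) is topologically transitive. -/
/-!
Every open set meeting `Y2` meets `Y1`, and unless `Y1 = 0` (when `Y2 = 0` and all is trivial)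
even the nonzero vectors of `Y1` are dense in `Y2`, since `0` is a limit of nonzero multiples.
The points that hypermixing or strong transitivity of `(T, Y1)` provide for an open set `G` lie in
images of `G ∩ Y1 ⊆ G ∩ Y2`, so they witness supermixing or transitivity of `(T, Y2)`.
-/

open Set Filter Topology

variable {X : Type*} [NormedAddCommGroup X] [NormedSpace ℝ X] [CompleteSpace X]

theorem Submodule.closure_diff_zero {E : Type*} [AddCommGroup E] [Module ℝ E]
    [TopologicalSpace E] [IsTopologicalAddGroup E] [ContinuousSMul ℝ E] {Y : Submodule ℝ E}
    (hY : Y ≠ ⊥) : closure ((Y : Set E) \ {0}) = closure Y := by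
  have : Nontrivial Y := Submodule.nontrivial_iff_ne_bot.mpr hY
  refine (closure_mono sdiff_subset).antisymm (closure_minimal (fun y hy => ?_) isClosed_closure)
  have hy' : (⟨y, hy⟩ : Y) ∈ closure ({0}ᶜ : Set Y) := by
    rw [closure_compl_singleton]
    trivial
  rw [closure_subtype] at hy'
  convert hy' using 2
  ext x
  simp [and_comm]

theorem IsOpen.inter_nonempty_of_subset_closure {α : Type*} [TopologicalSpace α]
    {s t G : Set α} (hG : IsOpen G) (hst : s ⊆ closure t) (h : (G ∩ s).Nonempty) :
    (G ∩ t).Nonempty := by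
  rw [inter_comm, ← closure_inter_open_nonempty_iff hG]
  exact (h.mono (inter_subset_inter_right G hst)).mono (inter_comm _ _).le

section

variable {E : Type*} [NormedAddCommGroup E] [NormedSpace ℝ E] {T : E →ₗ[ℝ] E}
  {Y1 Y2 : Submodule ℝ E}

theorem HM.to_SM_of_subset_closure (h : HM T Y1) (h12 : (Y1 : Set E) ⊆ Y2)
    (h2c : (Y2 : Set E) ⊆ closure Y1) : SM T Y2 := by
  intro G hG hGY2
  set S := ⋃ i : ℕ, ⋂ n : ℕ, ⋂ (_ : i ≤ n), (⇑T)^[n] '' (G ∩ (Y2 : Set E))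
  rcases eq_or_ne Y1 ⊥ with rfl | hY1
  · have hY2 : (Y2 : Set E) ⊆ {0} := by simpa using h2c
    obtain ⟨z, hzG, hzY2⟩ := hGY2
    obtain rfl := hY2 hzY2
    intro x hx
    obtain rfl := hY2 hx
    refine subset_closure ⟨mem_iUnion.mpr ⟨0, mem_iInter₂.mpr fun n _ => ?_⟩, hx⟩
    exact ⟨0, ⟨hzG, hzY2⟩, iterate_map_zero T n⟩
  · have hS : ⋃ i : ℕ, ⋂ n : ℕ, ⋂ (_ : i ≤ n), (⇑T)^[n] '' (G ∩ (Y1 : Set E)) ⊆ S :=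
      iUnion_mono fun i => iInter₂_mono fun n _ => image_mono (inter_subset_inter_right G h12)
    have hGY1 := hG.inter_nonempty_of_subset_closure h2c hGY2
    have hsub : (Y1 : Set E) \ {0} ⊆ S ∩ Y2 := fun x hx => ⟨hS (h G hG hGY1 hx), h12 hx.1⟩
    rw [← Submodule.closure_diff_zero hY1] at h2c
    exact h2c.trans (closure_mono hsub)

theorem STT.to_TT_of_subset_closure (h : STT T Y1) (h12 : (Y1 : Set E) ⊆ Y2)
    (h2c : (Y2 : Set E) ⊆ closure Y1) : TT T Y2 := by
  intro G H hG hH hGY2 hHY2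
  rcases eq_or_ne Y1 ⊥ with rfl | hY1
  · have hY2 : (Y2 : Set E) ⊆ {0} := by simpa using h2c
    obtain ⟨z, hzG, hzY2⟩ := hGY2
    obtain ⟨w, hwH, hwY2⟩ := hHY2
    obtain rfl := hY2 hzY2
    obtain rfl := hY2 hwY2
    exact ⟨0, 0, ⟨0, ⟨hzG, hzY2⟩, rfl⟩, hwH, hwY2⟩
  · have hGY1 := hG.inter_nonempty_of_subset_closure h2c hGY2
    rw [← Submodule.closure_diff_zero hY1] at h2c
    obtain ⟨w, hwH, hw⟩ := hH.inter_nonempty_of_subset_closure h2c hHY2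
    obtain ⟨n, hn⟩ := mem_iUnion.mp (h G hG hGY1 hw)
    exact ⟨n, w, image_mono (inter_subset_inter_right G h12) hn, hwH, h12 hw.1⟩

end

theorem stmt19_general
    (T : X →ₗ[ℝ] X) (Y1 Y2 : Submodule ℝ X)
    (h12 : (Y1 : Set X) ⊆ (Y2 : Set X))
    (h2c : (Y2 : Set X) ⊆ closure (Y1 : Set X)) :
    (HM T (Y1 : Set X) → SM T (Y2 : Set X)) ∧
    (STT T (Y1 : Set X) → TT T (Y2 : Set X)) :=
  ⟨fun h => h.to_SM_of_subset_closure h12 h2c, fun h => h.to_TT_of_subset_closure h12 h2c⟩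

/-- for an up-to-closure extension `Y1 ⊆ Y2 ⊆ closure Y1`, hypermixing of
`(T,Y1)` gives supermixing of `(T,Y2)`, and strong topological transitivity of `(T,Y1)`
gives topological transitivity of `(T,Y2)`. -/
theorem stmt19 [TopologicalSpace.SeparableSpace X] (hinf : ¬ FiniteDimensional ℝ X)
    (D : Submodule ℝ X) (T : X →ₗ[ℝ] X) (Y1 Y2 : Submodule ℝ X)
    (h12 : (Y1 : Set X) ⊆ (Y2 : Set X)) (hY2 : (Y2 : Set X) ⊆ Y0 D T)
    (h2c : (Y2 : Set X) ⊆ closure (Y1 : Set X)) :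
    (HM T (Y1 : Set X) → SM T (Y2 : Set X)) ∧
    (STT T (Y1 : Set X) → TT T (Y2 : Set X)) :=
  stmt19_general T Y1 Y2 h12 h2c
end
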